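/- Let μ ∈ ℂ∖ℝ. Then there is C > 0 such that for all h > 0 and all ξ ∈ Ω_h: |(E^tr_0(ξ)−μ)⁻¹| ≤ C(1+|ξ|²)⁻¹ and |(E^hex_−(ξ)−μ)⁻¹| ≤ C(1+|ξ|²)⁻¹. -/

import Mathlib

open MeasureTheory Complex Filter Topology Matrix
open scoped FourierTransform RealInnerProductSpace ComplexConjugate

noncomputable section

abbrev R2 : Type := EuclideanSpace ℝ (Fin 2)

def v2 (a b : ℝ) : R2 := WithLp.toLp 2 ![a, b]

def he1 : R2 := v2 (1/2) (Real.sqrt 3 / 2)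
def he2 : R2 := v2 (1/2) (-(Real.sqrt 3) / 2)
def he3 : R2 := v2 (-1) 0
def hf1 : R2 := v2 (3/2) (Real.sqrt 3 / 2)
def hf2 : R2 := v2 (3/2) (-(Real.sqrt 3) / 2)
def hf1' : R2 := v2 (1/3) (Real.sqrt 3 / 3)
def hf2' : R2 := v2 (1/3) (-(Real.sqrt 3) / 3)

/-- `φ_f(ξ) = exp(2πi h f·ξ)`. -/
def phase (h : ℝ) (f ξ : R2) : ℂ :=
  Complex.exp (2 * Real.pi * Complex.I * (h : ℂ) * ((⟪f, ξ⟫ : ℝ) : ℂ))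

/-- `α(ξ) = 1 + φ_{f₁}(ξ) + φ_{f₂}(ξ)`. -/
def alphaHex (h : ℝ) (ξ : R2) : ℂ := 1 + phase h hf1 ξ + phase h hf2 ξ

/-- `E^hex_−(ξ) = h⁻²(3 − |α(ξ)|)`. -/
def EhexM (h : ℝ) (ξ : R2) : ℝ := (3 - ‖alphaHex h ξ‖) / h ^ 2

/-- `E^tr_0(ξ) = h⁻²(6 − 2∑_{j=1}^3 cos(2πh e_j·ξ))`. -/
def Etr (h : ℝ) (ξ : R2) : ℝ :=
  (6 - 2 * (Real.cos (2 * Real.pi * h * ⟪he1, ξ⟫) + Real.cos (2 * Real.pi * h * ⟪he2, ξ⟫) +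
    Real.cos (2 * Real.pi * h * ⟪he3, ξ⟫))) / h ^ 2

/-- The dual lattice `Γ'_h = ℤ(h⁻¹f₁') + ℤ(h⁻¹f₂')`. -/
def GammaDual (h : ℝ) : Set R2 :=
  {v | ∃ n₁ n₂ : ℤ, v = h⁻¹ • ((n₁ : ℝ) • hf1' + (n₂ : ℝ) • hf2')}

/-- The first Brillouin zone `Ω_h`. -/
def Omegah (h : ℝ) : Set R2 := {ξ | ∀ f' ∈ GammaDual h, f' ≠ 0 → ‖ξ‖ ≤ ‖ξ - f'‖}

/-! Write `tᵢ = h⟪eᵢ, ξ⟫`. Testing the Brillouin-zone inequalities against the six shortest dual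
vectors `±(2/(3h)) eᵢ` gives `|tᵢ| ≤ 1/3`; moreover `t₁ + t₂ + t₃ = 0` and
`t₁² + t₂² + t₃² = (3/2) h² ‖ξ‖²`. By Jordan's inequality `1 - cos 2πt ≥ 2t²` for `|t| ≤ 2/3`, so
`h² E^tr_0 = 2 ∑ (1 - cos 2πtᵢ) ≥ 6 h² ‖ξ‖²` and
`9 - |α|² = 2 ∑_{i<j} (1 - cos 2π(tᵢ - tⱼ)) ≥ 18 h² ‖ξ‖²`, whence
`3 - |α| ≥ (9 - |α|²)/6 ≥ 3 h² ‖ξ‖²`. Both symbols thus dominate `‖ξ‖²` on `Ω_h`, and for real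
`E ≥ r ≥ 0` the distance `|E - μ|` is at least `|Im μ|` and at least `E - |μ|`, hence `≳ 1 + r`. -/

open Real

lemma le_sin_pi_mul {t : ℝ} (h0 : 0 ≤ t) (h1 : t ≤ 2 / 3) : t ≤ Real.sin (π * t) := by
  rcases le_total t (1 / 2) with ht | ht
  · calc t ≤ 2 * t := by linarith
      _ ≤ Real.sin (π / 2 * (2 * t)) := le_sin_mul (by linarith) (by linarith)
      _ = Real.sin (π * t) := by ring_nf
  · calc t ≤ 2 * (1 - t) := by linarith
      _ ≤ Real.sin (π / 2 * (2 * (1 - t))) := le_sin_mul (by linarith) (by linarith)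
      _ = Real.sin (π * t) := by rw [← Real.sin_pi_sub]; ring_nf

lemma two_mul_sq_le_one_sub_cos {t : ℝ} (ht : |t| ≤ 2 / 3) :
    2 * t ^ 2 ≤ 1 - Real.cos (2 * π * t) := by
  have hs := le_sin_pi_mul (abs_nonneg t) ht
  have hcos : Real.cos (2 * π * t) = 1 - 2 * Real.sin (π * |t|) ^ 2 := by
    rw [← Real.cos_abs, abs_mul, abs_of_pos (by positivity : (0:ℝ) < 2 * π),
      Real.sin_sq_eq_half_sub]
    ring_nf
  rw [hcos, ← sq_abs t]
  nlinarith [abs_nonneg t]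

lemma two_mul_inner_le_norm_sq_of_norm_le_norm_sub {E : Type*} [NormedAddCommGroup E]
    [InnerProductSpace ℝ E] {x f : E} (h : ‖x‖ ≤ ‖x - f‖) : 2 * ⟪x, f⟫ ≤ ‖f‖ ^ 2 := by
  have := pow_le_pow_left₀ (norm_nonneg x) h 2
  rw [norm_sub_sq_real] at this
  linarith

lemma norm_one_add_exp_add_exp_sq (a b : ℝ) :
    ‖1 + Complex.exp (a * I) + Complex.exp (b * I)‖ ^ 2
      = 3 + 2 * Real.cos a + 2 * Real.cos b + 2 * Real.cos (a - b) := by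
  rw [Complex.sq_norm, Complex.normSq_apply]
  simp only [add_re, add_im, one_re, one_im, exp_ofReal_mul_I_re, exp_ofReal_mul_I_im]
  linear_combination Real.sin_sq_add_cos_sq a + Real.sin_sq_add_cos_sq b - 2 * Real.cos_sub a b

lemma norm_inv_ofReal_sub_le {μ : ℂ} (hμ : μ.im ≠ 0) :
    ∃ C > (0 : ℝ), ∀ E r : ℝ, 0 ≤ r → r ≤ E → ‖((E : ℂ) - μ)⁻¹‖ ≤ C * (1 + r)⁻¹ := by
  have him : 0 < |μ.im| := abs_pos.2 hμ
  refine ⟨(2 + 2 * ‖μ‖) / |μ.im| + 2, by positivity, fun E r hr hrE => ?_⟩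
  have h_im : |μ.im| ≤ ‖(E : ℂ) - μ‖ := by
    simpa using Complex.abs_im_le_norm ((E : ℂ) - μ)
  have h_re : E - ‖μ‖ ≤ ‖(E : ℂ) - μ‖ := by
    simpa [abs_of_nonneg (hr.trans hrE)] using norm_sub_norm_le (E : ℂ) μ
  have key : 1 + r ≤ ((2 + 2 * ‖μ‖) / |μ.im| + 2) * ‖(E : ℂ) - μ‖ := by
    have hA : (2 + 2 * ‖μ‖) / |μ.im| * |μ.im| = 2 + 2 * ‖μ‖ := div_mul_cancel₀ _ him.ne'
    have := mul_le_mul_of_nonneg_left h_im (by positivity : 0 ≤ (2 + 2 * ‖μ‖) / |μ.im|)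
    rcases le_or_gt E (1 + 2 * ‖μ‖) with hE | hE <;> nlinarith [norm_nonneg μ]
  rw [norm_inv, inv_le_comm₀ (him.trans_le h_im) (by positivity), mul_inv, inv_inv,
    inv_mul_le_iff₀ (by positivity)]
  exact key

lemma inner_v2 (a b : ℝ) (ξ : R2) : ⟪v2 a b, ξ⟫ = a * ξ 0 + b * ξ 1 := by
  simp [v2, PiLp.inner_apply, Fin.sum_univ_two]; ring

lemma norm_sq_R2 (ξ : R2) : ‖ξ‖ ^ 2 = ξ 0 ^ 2 + ξ 1 ^ 2 := by
  simp [EuclideanSpace.real_norm_sq_eq, Fin.sum_univ_two]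

lemma neg_mem_GammaDual {h : ℝ} {f : R2} (hf : f ∈ GammaDual h) : -f ∈ GammaDual h := by
  obtain ⟨n₁, n₂, rfl⟩ := hf
  exact ⟨-n₁, -n₂, by push_cast; simp only [neg_smul, ← neg_add, smul_neg]⟩

lemma two_mul_abs_inner_le_of_mem_Omegah {h : ℝ} {ξ f : R2} (hξ : ξ ∈ Omegah h)
    (hf : f ∈ GammaDual h) (hf0 : f ≠ 0) : 2 * |⟪ξ, f⟫| ≤ ‖f‖ ^ 2 := by
  have hpos := two_mul_inner_le_norm_sq_of_norm_le_norm_sub (hξ f hf hf0)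
  have hneg := two_mul_inner_le_norm_sq_of_norm_le_norm_sub
    (hξ (-f) (neg_mem_GammaDual hf) (neg_ne_zero.2 hf0))
  rw [inner_neg_right, norm_neg] at hneg
  cases abs_cases ⟪ξ, f⟫ <;> linarith

lemma abs_mul_inner_le_of_mem_Omegah {h : ℝ} (hh : 0 < h) {ξ e : R2} (hξ : ξ ∈ Omegah h)
    (he : ‖e‖ = 1) (hmem : h⁻¹ • (2 / 3 : ℝ) • e ∈ GammaDual h) : |h * ⟪e, ξ⟫| ≤ 1 / 3 := by
  have hne : h⁻¹ • (2 / 3 : ℝ) • e ≠ 0 := by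
    rw [← norm_ne_zero_iff, norm_smul, norm_smul, he]; simp [hh.ne']
  have key := two_mul_abs_inner_le_of_mem_Omegah hξ hmem hne
  rw [inner_smul_right, inner_smul_right, norm_smul, norm_smul, he, real_inner_comm, abs_mul,
    abs_mul, Real.norm_eq_abs, Real.norm_eq_abs, abs_inv, abs_of_pos hh] at key
  rw [abs_mul, abs_of_pos hh]
  have h2 : 2 * (h⁻¹ * (2 / 3 * |⟪e, ξ⟫|)) ≤ (h⁻¹ * (2 / 3)) ^ 2 := by
    simpa [abs_of_pos (by norm_num : (0:ℝ) < 2 / 3)] using key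
  have h3 := mul_le_mul_of_nonneg_left h2 (by positivity : (0:ℝ) ≤ 3 / 4 * h ^ 2)
  field_simp at h3
  nlinarith

lemma norm_he1 : ‖he1‖ = 1 := by
  rw [EuclideanSpace.norm_eq]; simp [he1, v2, Fin.sum_univ_two, div_pow]; norm_num
lemma norm_he2 : ‖he2‖ = 1 := by
  rw [EuclideanSpace.norm_eq]; simp [he2, v2, Fin.sum_univ_two, div_pow]; norm_num
lemma norm_he3 : ‖he3‖ = 1 := by
  rw [EuclideanSpace.norm_eq]; simp [he3, v2, Fin.sum_univ_two]

lemma two_thirds_smul_he1 : (2 / 3 : ℝ) • he1 = hf1' := by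
  ext i; fin_cases i <;> simp [he1, hf1', v2]; ring
lemma two_thirds_smul_he2 : (2 / 3 : ℝ) • he2 = hf2' := by
  ext i; fin_cases i <;> simp [he2, hf2', v2]; ring
lemma two_thirds_smul_he3 : (2 / 3 : ℝ) • he3 = -(hf1' + hf2') := by
  ext i; fin_cases i <;> simp [he3, hf1', hf2', v2] <;> ring

lemma abs_mul_inner_he_le {h : ℝ} (hh : 0 < h) {ξ : R2} (hξ : ξ ∈ Omegah h) :
    |h * ⟪he1, ξ⟫| ≤ 1 / 3 ∧ |h * ⟪he2, ξ⟫| ≤ 1 / 3 ∧ |h * ⟪he3, ξ⟫| ≤ 1 / 3 :=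
  ⟨abs_mul_inner_le_of_mem_Omegah hh hξ norm_he1 ⟨1, 0, by simp [two_thirds_smul_he1]⟩,
    abs_mul_inner_le_of_mem_Omegah hh hξ norm_he2 ⟨0, 1, by simp [two_thirds_smul_he2]⟩,
    abs_mul_inner_le_of_mem_Omegah hh hξ norm_he3
      ⟨-1, -1, by simp [two_thirds_smul_he3, add_comm]⟩⟩

lemma inner_he_sum_eq_zero (ξ : R2) : ⟪he1, ξ⟫ + ⟪he2, ξ⟫ + ⟪he3, ξ⟫ = 0 := by
  simp only [he1, he2, he3, inner_v2]; ring

lemma inner_he_sq_sum (ξ : R2) :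
    ⟪he1, ξ⟫ ^ 2 + ⟪he2, ξ⟫ ^ 2 + ⟪he3, ξ⟫ ^ 2 = 3 / 2 * ‖ξ‖ ^ 2 := by
  simp only [he1, he2, he3, inner_v2, norm_sq_R2]
  linear_combination (ξ 1 ^ 2 / 2) * Real.sq_sqrt (show (0:ℝ) ≤ 3 by norm_num)

lemma inner_hf1 (ξ : R2) : ⟪hf1, ξ⟫ = ⟪he1, ξ⟫ - ⟪he3, ξ⟫ := by
  simp only [hf1, he1, he3, inner_v2]; ring
lemma inner_hf2 (ξ : R2) : ⟪hf2, ξ⟫ = ⟪he2, ξ⟫ - ⟪he3, ξ⟫ := by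
  simp only [hf2, he2, he3, inner_v2]; ring

lemma phase_eq_exp (h : ℝ) (f ξ : R2) :
    phase h f ξ = Complex.exp ((2 * π * h * ⟪f, ξ⟫ : ℝ) * I) := by
  rw [phase]; push_cast; ring_nf

lemma norm_alphaHex_le (h : ℝ) (ξ : R2) : ‖alphaHex h ξ‖ ≤ 3 := by
  have hφ : ∀ f, ‖phase h f ξ‖ = 1 := fun f => by
    rw [phase_eq_exp]; exact norm_exp_ofReal_mul_I _
  calc ‖alphaHex h ξ‖ ≤ ‖(1 : ℂ)‖ + ‖phase h hf1 ξ‖ + ‖phase h hf2 ξ‖ := norm_add₃_le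
    _ = 3 := by rw [hφ, hφ, norm_one]; norm_num

lemma norm_alphaHex_sq (h : ℝ) (ξ : R2) :
    ‖alphaHex h ξ‖ ^ 2 = 3 + 2 * Real.cos (2 * π * (h * ⟪he1, ξ⟫ - h * ⟪he3, ξ⟫))
      + 2 * Real.cos (2 * π * (h * ⟪he2, ξ⟫ - h * ⟪he3, ξ⟫))
      + 2 * Real.cos (2 * π * (h * ⟪he1, ξ⟫ - h * ⟪he2, ξ⟫)) := by
  rw [alphaHex, phase_eq_exp, phase_eq_exp, norm_one_add_exp_add_exp_sq, inner_hf1, inner_hf2]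
  ring_nf

lemma norm_sq_le_Etr {h : ℝ} (hh : 0 < h) {ξ : R2} (hξ : ξ ∈ Omegah h) : ‖ξ‖ ^ 2 ≤ Etr h ξ := by
  obtain ⟨b₁, b₂, b₃⟩ := abs_mul_inner_he_le hh hξ
  have c₁ := two_mul_sq_le_one_sub_cos (b₁.trans (by norm_num))
  have c₂ := two_mul_sq_le_one_sub_cos (b₂.trans (by norm_num))
  have c₃ := two_mul_sq_le_one_sub_cos (b₃.trans (by norm_num))
  have hsq := inner_he_sq_sum ξ
  simp only [← mul_assoc] at c₁ c₂ c₃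
  rw [Etr, le_div_iff₀ (by positivity)]
  nlinarith [sq_nonneg (h * ‖ξ‖)]

lemma norm_sq_le_EhexM {h : ℝ} (hh : 0 < h) {ξ : R2} (hξ : ξ ∈ Omegah h) :
    ‖ξ‖ ^ 2 ≤ EhexM h ξ := by
  obtain ⟨b₁, b₂, b₃⟩ := abs_mul_inner_he_le hh hξ
  have c₁₃ := two_mul_sq_le_one_sub_cos (t := h * ⟪he1, ξ⟫ - h * ⟪he3, ξ⟫)
    (by rw [abs_le] at *; constructor <;> linarith)
  have c₂₃ := two_mul_sq_le_one_sub_cos (t := h * ⟪he2, ξ⟫ - h * ⟪he3, ξ⟫)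
    (by rw [abs_le] at *; constructor <;> linarith)
  have c₁₂ := two_mul_sq_le_one_sub_cos (t := h * ⟪he1, ξ⟫ - h * ⟪he2, ξ⟫)
    (by rw [abs_le] at *; constructor <;> linarith)
  have hpairs : (h * ⟪he1, ξ⟫ - h * ⟪he3, ξ⟫) ^ 2 + (h * ⟪he2, ξ⟫ - h * ⟪he3, ξ⟫) ^ 2
      + (h * ⟪he1, ξ⟫ - h * ⟪he2, ξ⟫) ^ 2 = 9 / 2 * (h ^ 2 * ‖ξ‖ ^ 2) := by
    linear_combination (3 * h ^ 2) * inner_he_sq_sum ξ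
      - h ^ 2 * (⟪he1, ξ⟫ + ⟪he2, ξ⟫ + ⟪he3, ξ⟫) * inner_he_sum_eq_zero ξ
  have hdefect : 18 * (h ^ 2 * ‖ξ‖ ^ 2) ≤ 9 - ‖alphaHex h ξ‖ ^ 2 := by
    rw [norm_alphaHex_sq]; linarith
  have hα := norm_alphaHex_le h ξ
  rw [EhexM, le_div_iff₀ (by positivity)]
  -- `9 - ‖α‖² = (3 - ‖α‖)(3 + ‖α‖) ≤ 6 (3 - ‖α‖)`
  nlinarith [sq_nonneg (3 - ‖alphaHex h ξ‖)]

/-- Lemma `lem-hex-ellipticity`: for `μ ∈ ℂ∖ℝ` there is `C > 0` with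
`|(E^tr_0(ξ)−μ)⁻¹| ≤ C⟨ξ⟩⁻²` and `|(E^hex_−(ξ)−μ)⁻¹| ≤ C⟨ξ⟩⁻²` on `Ω_h`. -/
theorem hexagonal_symbol_resolvent_bounds (μ : ℂ) (hμ : μ.im ≠ 0) :
    ∃ C > (0 : ℝ), ∀ h : ℝ, 0 < h → ∀ ξ ∈ Omegah h,
      ‖(((Etr h ξ : ℝ) : ℂ) - μ)⁻¹‖ ≤ C * (1 + ‖ξ‖ ^ 2)⁻¹ ∧
      ‖(((EhexM h ξ : ℝ) : ℂ) - μ)⁻¹‖ ≤ C * (1 + ‖ξ‖ ^ 2)⁻¹ := by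
  obtain ⟨C, hC, hbound⟩ := norm_inv_ofReal_sub_le hμ
  exact ⟨C, hC, fun h hh ξ hξ =>
    ⟨hbound _ _ (sq_nonneg _) (norm_sq_le_Etr hh hξ),
      hbound _ _ (sq_nonneg _) (norm_sq_le_EhexM hh hξ)⟩⟩

end
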